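/- Let (X,S) be an association scheme and let C denote the underlying category of j(X,S). Then every linear extension D₊ → E →(q) C is split: there exists a functor s : C → E with q∘s = id_C. In particular, every schemoid extension of j(X,S) is split. -/

import Mathlib

open CategoryTheory

universe v u

/-- The set of all morphisms of a category, bundled with their endpoints. -/
def Mor (C : Type u) [Category.{v} C] : Type max u v := Σ (x y : C), x ⟶ y

namespace Mor
variable {C : Type u} [Category.{v} C]
/-- The source of a morphism. -/
def src (m : Mor C) : C := m.1
/-- The target of a morphism. -/
def tgt (m : Mor C) : C := m.2.1
end Mor

/-- The identity of `x` as an element of `Mor C`. -/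
def idMor {C : Type u} [Category.{v} C] (x : C) : Mor C := ⟨x, x, 𝟙 x⟩

/-- Bundle a morphism into `Mor C`. -/
def mk3 {C : Type u} [Category.{v} C] {x y : C} (f : x ⟶ y) : Mor C := ⟨x, y, f⟩

/-- `IsComp a b m` holds iff `a` and `b` are composable (the target of `b` is the
source of `a`) and the composite `a ∘ b` equals `m`. -/
def IsComp {C : Type u} [Category.{v} C] (a b m : Mor C) : Prop :=
  ∃ (x y z : C) (f : x ⟶ y) (g : y ⟶ z), b = mk3 f ∧ a = mk3 g ∧ m = mk3 (f ≫ g)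

/-- The fiber over `m` of the concatenation map `π_{στ} : σ ×_{ob C} τ → mor C`,
where `σ` is the class of the second (outer) factor and `τ` that of the first
(inner) factor. -/
def compFiber {C : Type u} [Category.{v} C] (σ τ : Set (Mor C)) (m : Mor C) :
    Set (Mor C × Mor C) :=
  {p | p.1 ∈ σ ∧ p.2 ∈ τ ∧ IsComp p.1 p.2 m}

/-- A quasi-schemoid: a small category together with a partition of its set of
morphisms satisfying the concatenation axiom. -/
structure QuasiSchemoid (C : Type u) [Category.{v} C] where
  part : Set (Set (Mor C))
  isPartition : Setoid.IsPartition part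
  concat : ∀ σ ∈ part, ∀ τ ∈ part, ∀ μ ∈ part, ∀ f ∈ μ, ∀ g ∈ μ,
    Nonempty ((compFiber σ τ f : Set (Mor C × Mor C)) ≃ (compFiber σ τ g : Set (Mor C × Mor C)))

/-- `p^μ_{τσ} = n` : every `m ∈ μ` has exactly `n` factorizations with outer factor
in `τ` and inner factor in `σ`. -/
def structEq {C : Type u} [Category.{v} C] (τ σ μ : Set (Mor C)) (n : ℕ) : Prop :=
  ∀ m ∈ μ, Nat.card (compFiber τ σ m) = n

/-- The set `J₀` of identities. -/
def J0 (C : Type u) [Category.{v} C] : Set (Mor C) := {m | ∃ x : C, m = idMor x}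

/-- A quasi-schemoid is unital if every class meeting `J₀` is contained in `J₀`. -/
def QuasiSchemoid.IsUnital {C : Type u} [Category.{v} C] (Q : QuasiSchemoid C) : Prop :=
  ∀ σ ∈ Q.part, (σ ∩ J0 C).Nonempty → σ ⊆ J0 C

/-- A contravariant endofunctor. -/
structure ContraFunctor (C : Type u) [Category.{v} C] where
  obj : C → C
  map : ∀ {x y : C}, (x ⟶ y) → (obj y ⟶ obj x)
  map_id : ∀ x : C, map (𝟙 x) = 𝟙 (obj x)
  map_comp : ∀ {x y z : C} (f : x ⟶ y) (g : y ⟶ z), map (f ≫ g) = map g ≫ map f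

/-- The action of a contravariant functor on bundled morphisms. -/
def ContraFunctor.onMor {C : Type u} [Category.{v} C] (T : ContraFunctor C) (m : Mor C) :
    Mor C :=
  ⟨T.obj m.2.1, T.obj m.1, T.map m.2.2⟩

/-- The set `J` of endomorphisms. -/
def JEndo (C : Type u) [Category.{v} C] : Set (Mor C) := {m | m.src = m.tgt}

/-- An association schemoid. -/
structure AssnSchemoid (C : Type u) [Category.{v} C] extends QuasiSchemoid C where
  T : ContraFunctor C
  T_invol : ∀ m : Mor C, T.onMor (T.onMor m) = m
  T_part : ∀ σ ∈ part, T.onMor '' σ ∈ part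
  endo : ∀ σ ∈ part, (σ ∩ JEndo C).Nonempty → σ ⊆ JEndo C

universe v₂ u₂

/-- The action of a functor on bundled morphisms. -/
def morMap {C : Type u} {D : Type u₂} [Category.{v} C] [Category.{v₂} D] (F : C ⥤ D)
    (m : Mor C) : Mor D :=
  ⟨F.obj m.1, F.obj m.2.1, F.map m.2.2⟩

/-- A functor is a morphism of quasi-schemoids if each class of the source partition is
mapped into some class of the target partition. -/
def IsQSMor {C : Type u} {D : Type u₂} [Category.{v} C] [Category.{v₂} D]
    (SC : Set (Set (Mor C))) (SD : Set (Set (Mor D))) (F : C ⥤ D) : Prop :=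
  ∀ σ ∈ SC, ∃ τ ∈ SD, morMap F '' σ ⊆ τ

/-- A morphism of association schemoids: a morphism of quasi-schemoids commuting with the
contravariant involutions. -/
def IsASMor {C : Type u} {D : Type u₂} [Category.{v} C] [Category.{v₂} D]
    (SC : Set (Set (Mor C))) (SD : Set (Set (Mor D)))
    (TC : ContraFunctor C) (TD : ContraFunctor D) (F : C ⥤ D) : Prop :=
  IsQSMor SC SD F ∧ ∀ m : Mor C, morMap F (TC.onMor m) = TD.onMor (morMap F m)

/-- `S₀` : the classes containing some identity. -/
def S0 {C : Type u} [Category.{v} C] (S : Set (Set (Mor C))) : Set (Set (Mor C)) :=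
  {α | α ∈ S ∧ ∃ x : C, idMor x ∈ α}

/-- `_αS_β = {σ ∈ S | p^σ_{σα} = p^σ_{βσ} = 1}`. -/
def hom2 {C : Type u} [Category.{v} C] (S : Set (Set (Mor C))) (α β : Set (Mor C)) :
    Set (Set (Mor C)) :=
  {σ | σ ∈ S ∧ structEq σ α σ 1 ∧ structEq β σ σ 1}

/-- The partition class containing a given morphism. -/
def classOf {C : Type u} [Category.{v} C] (S : Set (Set (Mor C))) (m : Mor C) :
    Set (Mor C) :=
  {m' | ∃ σ ∈ S, m ∈ σ ∧ m' ∈ σ}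

/-- An association scheme on a finite set `X`. -/
structure AssocScheme (X : Type u) [Fintype X] where
  part : Set (Set (X × X))
  isPartition : Setoid.IsPartition part
  diag_mem : {p : X × X | p.1 = p.2} ∈ part
  symm_mem : ∀ s ∈ part, Prod.swap '' s ∈ part
  regular : ∀ e ∈ part, ∀ f ∈ part, ∀ g ∈ part, ∀ p ∈ g, ∀ q ∈ g,
    Nat.card {y : X | (p.1, y) ∈ e ∧ (y, p.2) ∈ f} =
      Nat.card {y : X | (q.1, y) ∈ e ∧ (y, q.2) ∈ f}

/-- The underlying category of the schemoid `j(X,S)` : objects are the points of `X`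
and there is exactly one morphism `(x,y) : y ⟶ x` for every pair `(x,y)`. -/
def JCat (X : Type u) : Type u := X

instance JCat.category (X : Type u) : Category (JCat X) where
  Hom _ _ := PUnit
  id _ := ⟨⟩
  comp _ _ := ⟨⟩

/-- The class of morphisms of `JCat X` corresponding to a set of pairs `s ⊆ X × X` :
the morphism `(x,y) : y ⟶ x` belongs to it iff `(x,y) ∈ s`. -/
def jPartClass {X : Type u} (s : Set (X × X)) : Set (Mor (JCat X)) :=
  {m | ((Mor.tgt (C := JCat X) m, Mor.src (C := JCat X) m) : X × X) ∈ s}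

/-- The partition of `mor(j(X,S))` induced by an association scheme `(X,S)`. -/
def jPart {X : Type u} [Fintype X] (A : AssocScheme X) : Set (Set (Mor (JCat X))) :=
  {t | ∃ s ∈ A.part, t = jPartClass s}

/-- The contravariant involution of `j(X,S)` : `T(x) = x`, `T(x,y) = (y,x)`. -/
def jT (X : Type u) : ContraFunctor (JCat X) where
  obj x := x
  map _ := ⟨⟩
  map_id _ := rfl
  map_comp _ _ := rfl

/-- The functor `j(f) : j(X,S_X) ⥤ j(Y,S_Y)` induced by a map `f : X → Y`. -/
def jFunctor {X : Type u} {Y : Type u} (f : X → Y) : JCat X ⥤ JCat Y where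
  obj x := f x
  map _ := ⟨⟩

/-- A morphism of association schemes. -/
def IsSchemeHom {X : Type u} {Y : Type u} [Fintype X] [Fintype Y]
    (A : AssocScheme X) (B : AssocScheme Y) (f : X → Y) : Prop :=
  ∀ s ∈ A.part, ∃ t ∈ B.part, (fun p : X × X => (f p.1, f p.2)) '' s ⊆ t

/-- The category of factorizations `F(C)` : objects are the morphisms of `C`, and a
morphism `f → g` is a pair `(α,β)` with `α ∘ f ∘ β = g`. -/
def FactCat (C : Type u) [Category.{v} C] : Type max u v := Mor C

/-- Reinterpret an element of `Mor C` as an object of `F(C)`. -/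
def toFactCat {C : Type u} [Category.{v} C] (m : Mor C) : FactCat C := m

/-- Reinterpret an object of `F(C)` as an element of `Mor C`. -/
def FactCat.toMor {C : Type u} [Category.{v} C] (m : FactCat C) : Mor C := m

instance FactCat.category (C : Type u) [Category.{v} C] : Category (FactCat C) where
  Hom f g :=
    {p : (g.toMor.1 ⟶ f.toMor.1) × (f.toMor.2.1 ⟶ g.toMor.2.1) //
      p.1 ≫ f.toMor.2.2 ≫ p.2 = g.toMor.2.2}
  id f := ⟨(𝟙 _, 𝟙 _), by simp⟩
  comp {f g h} p q := ⟨(q.1.1 ≫ p.1.1, p.1.2 ≫ q.1.2), by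
    calc (q.1.1 ≫ p.1.1) ≫ f.toMor.2.2 ≫ (p.1.2 ≫ q.1.2)
        = q.1.1 ≫ (p.1.1 ≫ f.toMor.2.2 ≫ p.1.2) ≫ q.1.2 := by simp
      _ = q.1.1 ≫ g.toMor.2.2 ≫ q.1.2 := by rw [p.2]
      _ = h.toMor.2.2 := q.2⟩
  id_comp p := by apply Subtype.ext; simp
  comp_id p := by apply Subtype.ext; simp
  assoc p q r := by apply Subtype.ext; simp

/-- The abelian group `D_m` associated by a natural system `N : F(C) → Ab` to a
morphism `m`. -/
def elN {C : Type u} [Category.{v} C] (N : FactCat C ⥤ AddCommGrpCat.{w}) (m : Mor C) :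
    Type w :=
  N.obj (toFactCat m)

noncomputable instance elN.addCommGroup {C : Type u} [Category.{v} C]
    (N : FactCat C ⥤ AddCommGrpCat.{w}) (m : Mor C) : AddCommGroup (elN N m) :=
  inferInstanceAs (AddCommGroup (N.obj (toFactCat m)))

/-- The morphism `(f, 1) : g → g ≫ f` of `F(C)` inducing `f_*`. -/
def factPushHom {C : Type u} [Category.{v} C] {x y z : C} (g : x ⟶ y) (f : y ⟶ z) :
    toFactCat (mk3 g) ⟶ toFactCat (mk3 (g ≫ f)) :=
  ⟨(𝟙 x, f), by simp [toFactCat, FactCat.toMor, mk3]⟩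

/-- The morphism `(1, g) : f → g ≫ f` of `F(C)` inducing `g^*`. -/
def factPullHom {C : Type u} [Category.{v} C] {x y z : C} (g : x ⟶ y) (f : y ⟶ z) :
    toFactCat (mk3 f) ⟶ toFactCat (mk3 (g ≫ f)) :=
  ⟨(g, 𝟙 z), by simp [toFactCat, FactCat.toMor, mk3]⟩

/-- `f_* : D_g → D_{f∘g}` (post-composition by `f`). -/
def fpush {C : Type u} [Category.{v} C] (N : FactCat C ⥤ AddCommGrpCat.{w}) {x y z : C}
    (g : x ⟶ y) (f : y ⟶ z) : elN N (mk3 g) → elN N (mk3 (g ≫ f)) :=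
  fun a => N.map (factPushHom g f) a

/-- `g^* : D_f → D_{f∘g}` (pre-composition by `g`). -/
def fpull {C : Type u} [Category.{v} C] (N : FactCat C ⥤ AddCommGrpCat.{w}) {x y z : C}
    (g : x ⟶ y) (f : y ⟶ z) : elN N (mk3 f) → elN N (mk3 (g ≫ f)) :=
  fun a => N.map (factPullHom g f) a

/-- Transport in the coefficients of a natural system along an equality of morphisms. -/
def elCast {C : Type u} [Category.{v} C] (N : FactCat C ⥤ AddCommGrpCat.{w}) {x y : C}
    {f g : x ⟶ y} (h : f = g) (a : elN N (mk3 f)) : elN N (mk3 g) := by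
  subst h; exact a

/-- A linear extension `D₊ → E → C` of a small category `C` by a natural system
`N : F(C) → Ab` (Definition 5.1 of Kuribayashi–Matsuo, after Baues–Wirsching):
`E` has the same objects as `C`, `q` is a full functor which is the identity on
objects, each `D_f` acts transitively and effectively on `q⁻¹(f)`, and the linear
distributivity law holds. -/
structure LinExt (C : Type u) [Category.{v} C]
    (N : FactCat C ⥤ AddCommGrpCat.{w}) where
  hom : C → C → Type w
  id' : ∀ x : C, hom x x
  comp' : ∀ {x y z : C}, hom x y → hom y z → hom x z
  id_comp' : ∀ {x y : C} (e : hom x y), comp' (id' x) e = e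
  comp_id' : ∀ {x y : C} (e : hom x y), comp' e (id' y) = e
  assoc' : ∀ {w x y z : C} (a : hom w x) (b : hom x y) (c : hom y z),
    comp' (comp' a b) c = comp' a (comp' b c)
  /-- the projection `q`, identity on objects -/
  q : ∀ {x y : C}, hom x y → (x ⟶ y)
  q_id : ∀ x : C, q (id' x) = 𝟙 x
  q_comp : ∀ {x y z : C} (e : hom x y) (e' : hom y z), q (comp' e e') = q e ≫ q e'
  /-- `q` is full -/
  q_surj : ∀ {x y : C} (f : x ⟶ y), ∃ e : hom x y, q e = f
  /-- the action of `D_f` on `q⁻¹(f)`, written `e + a` -/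
  act : ∀ {x y : C} (e : hom x y), elN N (mk3 (q e)) → hom x y
  act_q : ∀ {x y : C} (e : hom x y) (a : elN N (mk3 (q e))), q (act e a) = q e
  act_zero : ∀ {x y : C} (e : hom x y), act e 0 = e
  act_add : ∀ {x y : C} (e : hom x y) (a b : elN N (mk3 (q e))),
    act (act e a) (elCast N (act_q e a).symm b) = act e (a + b)
  /-- transitivity of the action on fibers of `q` -/
  act_trans : ∀ {x y : C} (e e' : hom x y) (h : q e = q e'),
    ∃ a : elN N (mk3 (q e)), act e a = e'
  /-- effectiveness (freeness) of the action -/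
  act_free : ∀ {x y : C} (e : hom x y) (a : elN N (mk3 (q e))), act e a = e → a = 0
  /-- the linear distributivity law `(f₀+α)(g₀+β) = f₀g₀ + f_*β + g^*α` -/
  distrib : ∀ {x y z : C} (g₀ : hom x y) (f₀ : hom y z)
    (β : elN N (mk3 (q g₀))) (α : elN N (mk3 (q f₀))),
    comp' (act g₀ β) (act f₀ α) =
      act (comp' g₀ f₀)
        (elCast N (q_comp g₀ f₀).symm
          (fpush N (q g₀) (q f₀) β + fpull N (q g₀) (q f₀) α))

/-- The total category `E` of a linear extension. -/
def LinExt.Carrier {C : Type u} [Category.{v} C]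
    {N : FactCat C ⥤ AddCommGrpCat.{w}} (_ : LinExt C N) : Type u := C

instance LinExt.category {C : Type u} [Category.{v} C]
    {N : FactCat C ⥤ AddCommGrpCat.{w}} (L : LinExt C N) : Category L.Carrier where
  Hom x y := L.hom x y
  id x := L.id' x
  comp e e' := L.comp' e e'
  id_comp e := L.id_comp' e
  comp_id e := L.comp_id' e
  assoc a b c := L.assoc' a b c

/-- The projection functor `q : E ⥤ C` of a linear extension. -/
def LinExt.qFunctor {C : Type u} [Category.{v} C]
    {N : FactCat C ⥤ AddCommGrpCat.{w}} (L : LinExt C N) : L.Carrier ⥤ C where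
  obj x := x
  map e := L.q e
  map_id x := L.q_id x
  map_comp e e' := L.q_comp e e'

/-- The partition `S̃ = {q⁻¹(σ)}_{σ ∈ S}` of `mor E`. -/
def preimagePart {C : Type u} [Category.{v} C] {N : FactCat C ⥤ AddCommGrpCat.{w}}
    (L : LinExt C N) (S : Set (Set (Mor C))) : Set (Set (Mor L.Carrier)) :=
  {s | ∃ σ ∈ S, s = morMap L.qFunctor ⁻¹' σ}

/-- A proper morphism of quasi-schemoids: a morphism which is injective on the
partitions. -/
def IsProperQSMor {C : Type u} {D : Type u₂} [Category.{v} C] [Category.{v₂} D]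
    (SC : Set (Set (Mor C))) (SD : Set (Set (Mor D))) (F : C ⥤ D) : Prop :=
  IsQSMor SC SD F ∧
    ∀ σ₁ ∈ SC, ∀ σ₂ ∈ SC, ∀ τ ∈ SD,
      morMap F '' σ₁ ⊆ τ → morMap F '' σ₂ ⊆ τ → σ₁ = σ₂

/-
Every morphism of the underlying category of `j(X,S)` is invertible, and along a linear extension
`q : E ⥤ C` lifts of isomorphisms are isomorphisms: if `e` lies over an isomorphism `f` and `w`
over `f⁻¹`, then `1 = e ≫ w + a` for some `a`, and since `f^*` is bijective (it is induced by an
isomorphism of `F(C)`), `e ≫ (w + α) = e ≫ w + f^* α = 1` for a suitable `α`. Fixing a point `x₀`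
and lifts `ℓ_x : x₀ ≅ x` of the unique morphisms `x₀ ⟶ x`, the assignment
`(x ⟶ y) ↦ ℓ_x⁻¹ ≫ ℓ_y` is then a functor splitting `q`.
-/

lemma elCast_symm_elCast {C : Type u} [Category.{v} C] (N : FactCat C ⥤ AddCommGrpCat.{w})
    {x y : C} {f g : x ⟶ y} (h : f = g) (a : elN N (mk3 f)) :
    elCast N h.symm (elCast N h a) = a := by
  cases h; rfl

instance isIso_factPullHom {C : Type u} [Category.{v} C] {x y z : C} (g : x ⟶ y) [IsIso g]
    (f : y ⟶ z) : IsIso (factPullHom g f) :=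
  ⟨⟨⟨((inv g : y ⟶ x), 𝟙 z), by simp [toFactCat, FactCat.toMor, mk3]⟩,
    Subtype.ext (Prod.ext (IsIso.inv_hom_id g) (Category.id_comp _)),
    Subtype.ext (Prod.ext (IsIso.hom_inv_id g) (Category.id_comp _))⟩⟩

lemma fpull_surjective {C : Type u} [Category.{v} C] (N : FactCat C ⥤ AddCommGrpCat.{w})
    {x y z : C} (g : x ⟶ y) [IsIso g] (f : y ⟶ z) : Function.Surjective (fpull N g f) :=
  (ConcreteCategory.bijective_of_isIso (N.map (factPullHom g f))).2

lemma fpush_zero {C : Type u} [Category.{v} C] (N : FactCat C ⥤ AddCommGrpCat.{w})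
    {x y z : C} (g : x ⟶ y) (f : y ⟶ z) : fpush N g f 0 = 0 :=
  (N.map (factPushHom g f)).hom.map_zero

namespace LinExt

variable {C : Type u} [Category.{v} C] {N : FactCat C ⥤ AddCommGrpCat.{w}} (L : LinExt C N)

lemma exists_comp_eq_id {x y : C} (e : L.hom x y) [IsIso (L.q e)] :
    ∃ e' : L.hom y x, L.comp' e e' = L.id' x := by
  obtain ⟨w, hw⟩ := L.q_surj (inv (L.q e))
  obtain ⟨a, ha⟩ := L.act_trans (L.comp' e w) (L.id' x) (by simp [L.q_comp, L.q_id, hw])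
  obtain ⟨α, hα⟩ := fpull_surjective N (L.q e) (L.q w) (elCast N (L.q_comp e w) a)
  refine ⟨L.act w α, ?_⟩
  calc L.comp' e (L.act w α)
      = L.comp' (L.act e 0) (L.act w α) := by rw [L.act_zero]
    _ = L.act (L.comp' e w) a := by
        rw [L.distrib, fpush_zero, zero_add, hα, elCast_symm_elCast]
    _ = L.id' x := ha

instance full_qFunctor : L.qFunctor.Full := ⟨L.q_surj⟩

lemma exists_hom_inv_id {x y : L.Carrier} (e : x ⟶ y) [IsIso (L.qFunctor.map e)] :
    ∃ e' : y ⟶ x, e ≫ e' = 𝟙 x := by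
  have : IsIso (L.q e) := ‹_›
  exact L.exists_comp_eq_id (x := x) (y := y) e

/-- A right inverse `e'` of `e` lies over `(q e)⁻¹`, so it has a right inverse `e''` as well,
and `e = e ≫ e' ≫ e'' = e''`. -/
instance reflectsIsomorphisms_qFunctor : L.qFunctor.ReflectsIsomorphisms where
  reflects e _ := by
    obtain ⟨e', he'⟩ := L.exists_hom_inv_id e
    have hq : L.qFunctor.map e ≫ L.qFunctor.map e' = 𝟙 _ := by
      rw [← L.qFunctor.map_comp, he', L.qFunctor.map_id]
    have : IsIso (L.qFunctor.map e') := IsIso.inv_eq_of_hom_inv_id hq ▸ inferInstance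
    obtain ⟨e'', he''⟩ := L.exists_hom_inv_id e'
    have h : e'' = e := by
      rw [← Category.id_comp e'', ← he', Category.assoc, he'', Category.comp_id]
    exact ⟨e', he', h ▸ he''⟩

instance isIso_preimage_qFunctor {x y : L.Carrier}
    (f : L.qFunctor.obj x ⟶ L.qFunctor.obj y) [IsIso f] : IsIso (L.qFunctor.preimage f) := by
  have : IsIso (L.qFunctor.map (L.qFunctor.preimage f)) := by
    rw [Functor.map_preimage]; infer_instance
  exact isIso_of_reflects_iso _ L.qFunctor

end LinExt

instance JCat.isIso {X : Type u} {x y : JCat X} (f : x ⟶ y) : IsIso f :=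
  ⟨⟨⟨⟩, rfl, rfl⟩⟩

namespace LinExt

variable {X : Type u} {N : FactCat (JCat X) ⥤ AddCommGrpCat.{w}} (L : LinExt (JCat X) N)

noncomputable def liftIso (x₀ x : L.Carrier) : x₀ ≅ x :=
  asIso (L.qFunctor.preimage (⟨⟩ : L.qFunctor.obj x₀ ⟶ L.qFunctor.obj x))

noncomputable def splitting (x₀ : L.Carrier) : JCat X ⥤ L.Carrier where
  obj x := x
  map {x y} _ := (L.liftIso x₀ x).inv ≫ (L.liftIso x₀ y).hom
  map_id x := (L.liftIso x₀ x).inv_hom_id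
  map_comp {x y z : L.Carrier} _ _ := by simp

lemma splitting_comp_qFunctor (x₀ : L.Carrier) : L.splitting x₀ ⋙ L.qFunctor = 𝟭 (JCat X) :=
  CategoryTheory.Functor.ext (fun _ => rfl) (fun _ _ _ => rfl)

end LinExt

theorem linExt_over_jCat_split_general
    {X : Type u}
    (N : FactCat (JCat X) ⥤ AddCommGrpCat.{w}) (L : LinExt (JCat X) N) :
    ∃ s : JCat X ⥤ L.Carrier, s ⋙ L.qFunctor = 𝟭 (JCat X) := by
  rcases isEmpty_or_nonempty X with hX | ⟨⟨x₀⟩⟩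
  · have : IsEmpty (JCat X) := hX
    exact ⟨functorOfIsEmpty (C := JCat X) L.Carrier,
      CategoryTheory.Functor.ext isEmptyElim isEmptyElim⟩
  · exact ⟨L.splitting x₀, L.splitting_comp_qFunctor x₀⟩

/-- Corollary 5.7 of Kuribayashi–Matsuo: for an association scheme `(X,S)` with
underlying category `C` of `j(X,S)`, every linear extension `D₊ → E → C` is split;
in particular every schemoid extension of `j(X,S)` is split. -/
theorem linExt_over_jCat_split
    {X : Type u} [Fintype X] (A : AssocScheme X)
    (N : FactCat (JCat X) ⥤ AddCommGrpCat.{w}) (L : LinExt (JCat X) N) :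
    ∃ s : JCat X ⥤ L.Carrier, s ⋙ L.qFunctor = 𝟭 (JCat X) :=
  linExt_over_jCat_split_general N L
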